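/- arXiv:2301.04240 — 6 statements merged into one kernel-verified Lean document; each statement's English description precedes it below -/
import Mathlib

section
/- For any two real symmetric n×n matrices X and Y, the Euclidean norm of the difference of their eigenvalue vectors (each arranged in nonincreasing order) is at most the Frobenius norm of X − Y, i.e. ‖λ(X) − λ(Y)‖ ≤ ‖X − Y‖. -/
open Filter Topology Set Matrix

noncomputable section

def IsEigVec {n : ℕ} (X : Matrix (Fin n) (Fin n) ℝ) (a : Fin n → ℝ) : Prop :=
  (∀ i j : Fin n, i ≤ j → a j ≤ a i) ∧
    ∃ U : Matrix (Fin n) (Fin n) ℝ, U * Uᵀ = 1 ∧ X = U * Matrix.diagonal a * Uᵀ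

def vnorm {n : ℕ} (x : Fin n → ℝ) : ℝ := Real.sqrt (∑ i, (x i) ^ 2)

def fnorm {n : ℕ} (A : Matrix (Fin n) (Fin n) ℝ) : ℝ := Real.sqrt (∑ i, ∑ j, (A i j) ^ 2)

def mInner {n : ℕ} (A B : Matrix (Fin n) (Fin n) ℝ) : ℝ := Matrix.trace (A * B)

def subderiv {E : Type*} [AddCommGroup E] [Module ℝ E] [TopologicalSpace E]
    (f : E → EReal) (x w : E) : EReal :=
  Filter.liminf (fun p : ℝ × E => (((p.1)⁻¹ : ℝ) : EReal) * (f (x + p.1 • p.2) - f x))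
    ((nhdsWithin (0 : ℝ) (Set.Ioi 0)) ×ˢ nhds w)

def subderiv2With {E : Type*} [AddCommGroup E] [Module ℝ E] [TopologicalSpace E]
    (ip : E → E → ℝ) (f : E → EReal) (x v w : E) : EReal :=
  Filter.liminf (fun p : ℝ × E =>
      ((2 / p.1 ^ 2 : ℝ) : EReal) * (f (x + p.1 • p.2) - f x - ((p.1 * ip v p.2 : ℝ) : EReal)))
    ((nhdsWithin (0 : ℝ) (Set.Ioi 0)) ×ˢ nhds w)

def parabSubderiv {E : Type*} [AddCommGroup E] [Module ℝ E] [TopologicalSpace E]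
    (f : E → EReal) (x w : E) (dfw : ℝ) (z : E) : EReal :=
  Filter.liminf (fun p : ℝ × E =>
      ((2 / p.1 ^ 2 : ℝ) : EReal) *
        (f (x + p.1 • w + (p.1 ^ 2 / 2) • p.2) - f x - ((p.1 * dfw : ℝ) : EReal)))
    ((nhdsWithin (0 : ℝ) (Set.Ioi 0)) ×ˢ nhds z)

def tcone {E : Type*} [AddCommGroup E] [Module ℝ E] [TopologicalSpace E]
    (C : Set E) (x : E) : Set E :=
  {w | ∃ (t : ℕ → ℝ) (v : ℕ → E), (∀ k, 0 < t k) ∧ Filter.Tendsto t Filter.atTop (nhds 0) ∧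
      Filter.Tendsto v Filter.atTop (nhds w) ∧ ∀ k, x + t k • v k ∈ C}

def tcone2 {E : Type*} [AddCommGroup E] [Module ℝ E] [TopologicalSpace E]
    (C : Set E) (x w : E) : Set E :=
  {u | ∃ (t : ℕ → ℝ) (v : ℕ → E), (∀ k, 0 < t k) ∧ Filter.Tendsto t Filter.atTop (nhds 0) ∧
      Filter.Tendsto v Filter.atTop (nhds u) ∧ ∀ k, x + t k • w + (t k ^ 2 / 2) • v k ∈ C}

/-!
Hoffman–Wielandt. Write `X = U diag(a) Uᵀ`, `Y = V diag(b) Vᵀ` and `Q = UᵀV`. Then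
`‖X - Y‖² = ‖a‖² - 2 tr(X Yᵀ) + ‖b‖²` and `tr(X Yᵀ) = aᵀ (Q ⊙ Q) b`. As `Q` is orthogonal,
`Q ⊙ Q` is doubly stochastic, hence by Birkhoff's theorem a convex combination of permutation
matrices; for each permutation `σ` the rearrangement inequality gives `∑ aᵢ b_σ(i) ≤ ∑ aᵢ bᵢ`,
since `a` and `b` are both sorted nonincreasingly. So `tr(X Yᵀ) ≤ ⟨a, b⟩`, i.e.
`‖a - b‖² ≤ ‖X - Y‖²`.
-/

namespace Matrix

variable {ι R : Type*} [Fintype ι]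

section Trace

variable [CommRing R]

theorem trace_sub_mul_transpose_sub (A B : Matrix ι ι R) :
    trace ((A - B) * (A - B)ᵀ) = trace (A * Aᵀ) - 2 * trace (A * Bᵀ) + trace (B * Bᵀ) := by
  have hBA : trace (B * Aᵀ) = trace (A * Bᵀ) := by
    rw [← trace_transpose, transpose_mul, transpose_transpose]
  simp only [transpose_sub, sub_mul, mul_sub, trace_sub, hBA]
  ring

variable [DecidableEq ι]

theorem trace_conj_diagonal_mul_transpose_conj_diagonal (U V : Matrix ι ι R) (a b : ι → R) :
    trace (U * diagonal a * Uᵀ * (V * diagonal b * Vᵀ)ᵀ) =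
      a ⬝ᵥ ((Uᵀ * V) ⊙ (Uᵀ * V) *ᵥ b) := by
  have hcycle : trace (U * diagonal a * Uᵀ * (V * diagonal b * Vᵀ)ᵀ) =
      trace (diagonal a * (Uᵀ * V) * diagonal b * (Uᵀ * V)ᵀ) := by
    simp only [transpose_mul, transpose_transpose, diagonal_transpose, Matrix.mul_assoc]
    rw [trace_mul_comm U]
    simp only [Matrix.mul_assoc]
  rw [hcycle]
  simp only [trace, diag, mul_apply (N := (Uᵀ * V)ᵀ), mul_diagonal, diagonal_mul,
    transpose_apply, dotProduct, mulVec, hadamard_apply, Finset.mul_sum]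
  refine Finset.sum_congr rfl fun i _ => Finset.sum_congr rfl fun j _ => ?_
  ring

theorem trace_conj_diagonal_mul_transpose_self {U : Matrix ι ι R} (hU : Uᵀ * U = 1)
    (a : ι → R) : trace (U * diagonal a * Uᵀ * (U * diagonal a * Uᵀ)ᵀ) = a ⬝ᵥ a := by
  rw [trace_conj_diagonal_mul_transpose_conj_diagonal, hU, hadamard_one, diag_one,
    diagonal_one', one_mulVec]

end Trace

variable [DecidableEq ι] [Field R] [LinearOrder R] [IsStrictOrderedRing R]

theorem dotProduct_mulVec_le_of_mem_doublyStochastic {a b : ι → R} (hab : Monovary a b)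
    {D : Matrix ι ι R} (hD : D ∈ doublyStochastic R ι) :
    a ⬝ᵥ (D *ᵥ b) ≤ a ⬝ᵥ b := by
  obtain ⟨w, hw_nonneg, hw_sum, rfl⟩ := exists_eq_sum_perm_of_mem_doublyStochastic hD
  calc a ⬝ᵥ ((∑ σ, w σ • σ.permMatrix R) *ᵥ b)
      = ∑ σ, w σ * ∑ i, a i * b (σ i) := by
        simp only [Matrix.sum_mulVec, smul_mulVec, permMatrix_mulVec, dotProduct,
          Finset.sum_apply, Pi.smul_apply, Function.comp_apply, smul_eq_mul, Finset.mul_sum]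
        rw [Finset.sum_comm]
        exact Finset.sum_congr rfl fun σ _ => Finset.sum_congr rfl fun i _ => by ring
    _ ≤ ∑ σ, w σ * ∑ i, a i * b i :=
        Finset.sum_le_sum fun σ _ =>
          mul_le_mul_of_nonneg_left hab.sum_mul_comp_perm_le_sum_mul (hw_nonneg σ)
    _ = a ⬝ᵥ b := by rw [← Finset.sum_mul, hw_sum, one_mul, dotProduct]

theorem hadamard_self_mem_doublyStochastic {Q : Matrix ι ι R} (hQ : Q * Qᵀ = 1) :
    Q ⊙ Q ∈ doublyStochastic R ι := by
  have hQ' : Qᵀ * Q = 1 := mul_eq_one_comm.mp hQ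
  refine mem_doublyStochastic_iff_sum.mpr ⟨fun i j => mul_self_nonneg (Q i j), fun i => ?_,
    fun j => ?_⟩
  · simpa [mul_apply] using congrFun (congrFun hQ i) i
  · simpa [mul_apply] using congrFun (congrFun hQ' j) j

end Matrix

open Matrix

theorem vnorm_eq_sqrt_dotProduct {n : ℕ} (x : Fin n → ℝ) : vnorm x = √(x ⬝ᵥ x) := by
  simp only [vnorm, dotProduct, sq]

theorem fnorm_eq_sqrt_trace {n : ℕ} (A : Matrix (Fin n) (Fin n) ℝ) :
    fnorm A = √(trace (A * Aᵀ)) := by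
  simp only [fnorm, trace, diag, mul_apply, transpose_apply, sq]

theorem eigenvalue_vector_lipschitz_general {n : ℕ} (X Y : Matrix (Fin n) (Fin n) ℝ)
    (a b : Fin n → ℝ)
    (ha : IsEigVec X a) (hb : IsEigVec Y b) :
    vnorm (a - b) ≤ fnorm (X - Y) := by
  obtain ⟨ha_anti, U, hU, rfl⟩ := ha
  obtain ⟨hb_anti, V, hV, rfl⟩ := hb
  have hUU : Uᵀ * U = 1 := mul_eq_one_comm.mp hU
  have hQ : (Uᵀ * V) * (Uᵀ * V)ᵀ = 1 := by
    rw [transpose_mul, transpose_transpose, Matrix.mul_assoc, ← Matrix.mul_assoc V, hV,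
      Matrix.one_mul, hUU]
  have hab : a ⬝ᵥ ((Uᵀ * V) ⊙ (Uᵀ * V) *ᵥ b) ≤ a ⬝ᵥ b :=
    dotProduct_mulVec_le_of_mem_doublyStochastic (Antitone.monovary ha_anti hb_anti)
      (hadamard_self_mem_doublyStochastic hQ)
  rw [vnorm_eq_sqrt_dotProduct, fnorm_eq_sqrt_trace, trace_sub_mul_transpose_sub,
    trace_conj_diagonal_mul_transpose_self hUU,
    trace_conj_diagonal_mul_transpose_self (mul_eq_one_comm.mp hV),
    trace_conj_diagonal_mul_transpose_conj_diagonal]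
  refine Real.sqrt_le_sqrt ?_
  simp only [sub_dotProduct, dotProduct_sub, dotProduct_comm b a]
  linarith

/-- ‖λ(X) − λ(Y)‖ ≤ ‖X − Y‖ (Frobenius). -/
theorem eigenvalue_vector_lipschitz {n : ℕ} (X Y : Matrix (Fin n) (Fin n) ℝ)
    (hX : X.IsSymm) (hY : Y.IsSymm) (a b : Fin n → ℝ)
    (ha : IsEigVec X a) (hb : IsEigVec Y b) :
    vnorm (a - b) ≤ fnorm (X - Y) :=
  eigenvalue_vector_lipschitz_general X Y a b ha hb
end
end

section
/- Let C ⊆ Sⁿ be a spectral set, i.e. C = {X ∈ Sⁿ : λ(X) ∈ Θ} for a permutation-invariant set Θ ⊆ ℝⁿ. Then for every X ∈ Sⁿ, dist(X, C) = dist(λ(X), Θ). -/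
open Filter Topology Set Matrix

noncomputable section

/-!
Write `X = U diag(a) Uᵀ` and `Z = V diag(b) Vᵀ` with `a`, `b` sorted decreasingly, and put
`W = UᵀV`. Then `tr(XZ) = aᵀ S b` where `S = (W_ij²)` is doubly stochastic; by Birkhoff's
theorem the linear functional `S ↦ aᵀ S b` is maximised at a permutation matrix, where the
rearrangement inequality bounds it by `⟨a, b⟩` (von Neumann's trace inequality). Expanding the
squares gives the Hoffman–Wielandt inequality `‖a - b‖ ≤ ‖X - Z‖`, hence
`dist(a, Θ) ≤ dist(X, C)`. Conversely, for `y ∈ Θ` the matrix `U diag(y) Uᵀ` has a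
rearrangement of `y` as its eigenvalue vector, so it lies in `C` by the symmetry of `Θ`, and its
distance to `X` is exactly `‖a - y‖`.
-/

section Orthogonal

variable {m R : Type*} [Fintype m] [CommRing R]

lemma sum_sq_apply_eq_trace_mul_transpose (A : Matrix m m R) :
    ∑ i, ∑ j, A i j ^ 2 = trace (A * Aᵀ) := by
  simp [trace, mul_apply, sq]

variable [DecidableEq m]

lemma trace_conj_transpose {U : Matrix m m R} (hU : Uᵀ * U = 1) (A : Matrix m m R) :
    trace (U * A * Uᵀ) = trace A := by
  rw [trace_mul_comm, ← Matrix.mul_assoc, hU, Matrix.one_mul]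

lemma sum_sq_apply_conj_transpose {U : Matrix m m R} (hU : U * Uᵀ = 1) (A : Matrix m m R) :
    ∑ i, ∑ j, (U * A * Uᵀ) i j ^ 2 = ∑ i, ∑ j, A i j ^ 2 := by
  have hU' : Uᵀ * U = 1 := mul_eq_one_comm.mp hU
  have hconj : (U * A * Uᵀ) * (U * A * Uᵀ)ᵀ = U * (A * Aᵀ) * Uᵀ := by
    simp only [transpose_mul, transpose_transpose, Matrix.mul_assoc]
    rw [← Matrix.mul_assoc Uᵀ U, hU', Matrix.one_mul]
  rw [sum_sq_apply_eq_trace_mul_transpose, sum_sq_apply_eq_trace_mul_transpose, hconj,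
    trace_conj_transpose hU']

lemma sum_sq_apply_diagonal (d : m → R) : ∑ i, ∑ j, diagonal d i j ^ 2 = ∑ i, d i ^ 2 := by
  simp [diagonal_apply, sq]

lemma permMatrix_mul_transpose (σ : Equiv.Perm m) :
    σ.permMatrix R * (σ.permMatrix R)ᵀ = 1 := by
  rw [transpose_permMatrix, ← permMatrix_mul, inv_mul_cancel, permMatrix_one]

lemma permMatrix_mul_diagonal_mul_transpose (σ : Equiv.Perm m) (d : m → R) :
    σ.permMatrix R * diagonal d * (σ.permMatrix R)ᵀ = diagonal (d ∘ σ) := by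
  ext i j
  rw [mul_apply, Finset.sum_eq_single (σ i)]
  · simp [mul_apply, diagonal_apply, Equiv.toPEquiv_apply, eq_comm]
  · intro k _ hk
    simp [mul_apply, diagonal_apply, Equiv.toPEquiv_apply, Ne.symm hk]
  · simp

lemma trace_diagonal_mul_mul_diagonal_mul_transpose (a b : m → R) (W : Matrix m m R) :
    trace (diagonal a * W * diagonal b * Wᵀ) = a ⬝ᵥ (of (fun i j => W i j ^ 2) *ᵥ b) := by
  have hscale : diagonal a * W * diagonal b = of fun i j => a i * W i j * b j := by
    ext i j
    simp [diagonal_mul, mul_diagonal]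
  simp only [hscale, trace, diag, mul_apply, transpose_apply, dotProduct, mulVec, of_apply,
    Finset.mul_sum]
  exact Finset.sum_congr rfl fun i _ => Finset.sum_congr rfl fun j _ => by ring

end Orthogonal

section Rearrangement

variable {m R : Type*} [Fintype m] [DecidableEq m] [Field R] [LinearOrder R]
  [IsStrictOrderedRing R]

lemma sq_apply_mem_doublyStochastic {W : Matrix m m R} (hW : W * Wᵀ = 1) :
    of (fun i j => W i j ^ 2) ∈ doublyStochastic R m := by
  have hW' : Wᵀ * W = 1 := mul_eq_one_comm.mp hW
  refine mem_doublyStochastic_iff_sum.mpr ⟨fun i j => sq_nonneg _, fun i => ?_, fun j => ?_⟩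
  · simpa [mul_apply, sq] using congrFun (congrFun hW i) i
  · simpa [mul_apply, sq] using congrFun (congrFun hW' j) j

lemma Monovary.dotProduct_mulVec_le_of_mem_doublyStochastic {a b : m → R} (hab : Monovary a b)
    {M : Matrix m m R} (hM : M ∈ doublyStochastic R m) : a ⬝ᵥ (M *ᵥ b) ≤ a ⬝ᵥ b := by
  have hlin : IsLinearMap R fun M : Matrix m m R => a ⬝ᵥ (M *ᵥ b) :=
    ⟨fun M N => by simp [add_mulVec, dotProduct_add],
      fun c M => by simp [smul_mulVec, dotProduct_smul]⟩
  rw [← SetLike.mem_coe, doublyStochastic_eq_convexHull_permMatrix] at hM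
  refine convexHull_min ?_ (convex_halfSpace_le hlin _) hM
  rintro _ ⟨σ, rfl⟩
  simpa [permMatrix_mulVec, dotProduct] using hab.sum_mul_comp_perm_le_sum_mul (σ := σ)

end Rearrangement

section Infimum

variable {α β γ : Type*} [ConditionallyCompleteLattice γ] {s : Set α} {t : Set β}
  {f : α → γ} {g : β → γ}

lemma csInf_image_le_csInf_image_of_forall_exists_le (hg : BddBelow (g '' t)) (hs : s.Nonempty)
    (h : ∀ x ∈ s, ∃ y ∈ t, g y ≤ f x) : sInf (g '' t) ≤ sInf (f '' s) := by
  refine le_csInf (hs.image f) ?_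
  rintro _ ⟨x, hx, rfl⟩
  obtain ⟨y, hy, hyx⟩ := h x hx
  exact (csInf_le hg ⟨y, hy, rfl⟩).trans hyx

lemma csInf_image_eq_of_forall_exists_le (hf : BddBelow (f '' s)) (hg : BddBelow (g '' t))
    (hst : ∀ x ∈ s, ∃ y ∈ t, g y ≤ f x) (hts : ∀ y ∈ t, ∃ x ∈ s, f x ≤ g y) :
    sInf (f '' s) = sInf (g '' t) := by
  rcases s.eq_empty_or_nonempty with rfl | hs
  · have ht : t = ∅ := eq_empty_of_forall_notMem fun y hy => by
      obtain ⟨x, hx, -⟩ := hts y hy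
      exact hx
    simp [ht]
  · obtain ⟨x, hx⟩ := hs
    obtain ⟨y, hy, -⟩ := hst x hx
    exact le_antisymm (csInf_image_le_csInf_image_of_forall_exists_le hf ⟨y, hy⟩ hts)
      (csInf_image_le_csInf_image_of_forall_exists_le hg ⟨x, hx⟩ hst)

end Infimum

variable {n : ℕ}

lemma exists_isEigVec_diagonal (y : Fin n → ℝ) :
    ∃ τ : Equiv.Perm (Fin n), IsEigVec (diagonal y) (y ∘ τ) := by
  set τ := Tuple.sort (fun i => -y i)
  refine ⟨τ, fun i j hij => by simpa using Tuple.monotone_sort (fun i => -y i) hij,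
    τ⁻¹.permMatrix ℝ, permMatrix_mul_transpose _, ?_⟩
  rw [permMatrix_mul_diagonal_mul_transpose]
  simp

lemma fnorm_conj_transpose_diagonal {U : Matrix (Fin n) (Fin n) ℝ} (hU : U * Uᵀ = 1)
    (d : Fin n → ℝ) :
    fnorm (U * diagonal d * Uᵀ) = vnorm d := by
  rw [fnorm, vnorm, sum_sq_apply_conj_transpose hU, sum_sq_apply_diagonal]

namespace IsEigVec

variable {X Z : Matrix (Fin n) (Fin n) ℝ} {a b : Fin n → ℝ}

lemma isSymm (hX : IsEigVec X a) : X.IsSymm := by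
  obtain ⟨_, U, _, rfl⟩ := hX
  simp [IsSymm, transpose_mul, Matrix.mul_assoc]

lemma sum_sq_apply (hX : IsEigVec X a) : ∑ i, ∑ j, X i j ^ 2 = ∑ i, a i ^ 2 := by
  obtain ⟨_, U, hU, rfl⟩ := hX
  rw [sum_sq_apply_conj_transpose hU, sum_sq_apply_diagonal]

lemma conj {U : Matrix (Fin n) (Fin n) ℝ} (hU : U * Uᵀ = 1) (hZ : IsEigVec Z b) :
    IsEigVec (U * Z * Uᵀ) b := by
  obtain ⟨hb, V, hV, rfl⟩ := hZ
  refine ⟨hb, U * V, ?_, by simp only [transpose_mul, Matrix.mul_assoc]⟩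
  rw [transpose_mul, Matrix.mul_assoc, ← Matrix.mul_assoc V, hV, Matrix.one_mul, hU]

lemma trace_mul_le (hX : IsEigVec X a) (hZ : IsEigVec Z b) : trace (X * Z) ≤ a ⬝ᵥ b := by
  obtain ⟨ha, U, hU, rfl⟩ := hX
  obtain ⟨hb, V, hV, rfl⟩ := hZ
  have hU' : Uᵀ * U = 1 := mul_eq_one_comm.mp hU
  set W := Uᵀ * V with hWdef
  have hW : W * Wᵀ = 1 := by
    rw [hWdef, transpose_mul, transpose_transpose, Matrix.mul_assoc, ← Matrix.mul_assoc V, hV,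
      Matrix.one_mul, hU']
  have hconj : U * diagonal a * Uᵀ * (V * diagonal b * Vᵀ) =
      U * (diagonal a * W * diagonal b * Wᵀ) * Uᵀ := by
    simp only [hWdef, transpose_mul, transpose_transpose, Matrix.mul_assoc]
    rw [hU, Matrix.mul_one]
  rw [hconj, trace_conj_transpose hU', trace_diagonal_mul_mul_diagonal_mul_transpose]
  exact (Antitone.monovary ha hb).dotProduct_mulVec_le_of_mem_doublyStochastic
    (sq_apply_mem_doublyStochastic hW)

lemma vnorm_sub_le_fnorm_sub (hX : IsEigVec X a) (hZ : IsEigVec Z b) :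
    vnorm (a - b) ≤ fnorm (X - Z) := by
  have hexpand_mat : ∑ i, ∑ j, (X - Z) i j ^ 2 =
      ∑ i, ∑ j, X i j ^ 2 - 2 * trace (X * Z) + ∑ i, ∑ j, Z i j ^ 2 := by
    rw [sum_sq_apply_eq_trace_mul_transpose, sum_sq_apply_eq_trace_mul_transpose,
      sum_sq_apply_eq_trace_mul_transpose, transpose_sub, hX.isSymm.eq, hZ.isSymm.eq, sub_mul,
      mul_sub, mul_sub, trace_sub, trace_sub, trace_sub, trace_mul_comm Z X]
    ring
  have hexpand_vec : ∑ i, (a - b) i ^ 2 = ∑ i, a i ^ 2 - 2 * a ⬝ᵥ b + ∑ i, b i ^ 2 := by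
    simp only [Pi.sub_apply, dotProduct, Finset.mul_sum, ← Finset.sum_add_distrib,
      ← Finset.sum_sub_distrib]
    exact Finset.sum_congr rfl fun i _ => by ring
  refine Real.sqrt_le_sqrt ?_
  rw [hexpand_mat, hexpand_vec, hX.sum_sq_apply, hZ.sum_sq_apply]
  linarith [hX.trace_mul_le hZ]

lemma exists_isEigVec_fnorm_sub_eq (hX : IsEigVec X a) (y : Fin n → ℝ) :
    ∃ (Z : Matrix (Fin n) (Fin n) ℝ) (τ : Equiv.Perm (Fin n)),
      IsEigVec Z (y ∘ τ) ∧ fnorm (X - Z) = vnorm (a - y) := by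
  obtain ⟨-, U, hU, rfl⟩ := hX
  obtain ⟨τ, hy⟩ := exists_isEigVec_diagonal y
  refine ⟨U * diagonal y * Uᵀ, τ, hy.conj hU, ?_⟩
  rw [← Matrix.sub_mul, ← Matrix.mul_sub, diagonal_sub, fnorm_conj_transpose_diagonal hU]
  rfl

end IsEigVec

theorem dist_spectral_set_general {n : ℕ} (Θ : Set (Fin n → ℝ))
    (hΘsym : ∀ (σ : Equiv.Perm (Fin n)) (x : Fin n → ℝ), x ∈ Θ → x ∘ σ ∈ Θ)
    (C : Set (Matrix (Fin n) (Fin n) ℝ))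
    (hC : C = {X | ∃ a : Fin n → ℝ, IsEigVec X a ∧ a ∈ Θ})
    (X : Matrix (Fin n) (Fin n) ℝ)
    (a : Fin n → ℝ) (ha : IsEigVec X a) :
    sInf ((fun Z => fnorm (X - Z)) '' C) = sInf ((fun y => vnorm (a - y)) '' Θ) := by
  subst hC
  refine csInf_image_eq_of_forall_exists_le ⟨0, ?_⟩ ⟨0, ?_⟩ ?_ ?_
  · rintro _ ⟨Z, -, rfl⟩
    exact Real.sqrt_nonneg _
  · rintro _ ⟨y, -, rfl⟩
    exact Real.sqrt_nonneg _
  · rintro Z ⟨b, hZ, hb⟩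
    exact ⟨b, hb, ha.vnorm_sub_le_fnorm_sub hZ⟩
  · intro y hy
    obtain ⟨Z, τ, hZ, hdist⟩ := ha.exists_isEigVec_fnorm_sub_eq y
    exact ⟨Z, ⟨y ∘ τ, hZ, hΘsym τ y hy⟩, hdist.le⟩

/-- for a spectral set C = {X : λ(X) ∈ Θ}, dist(X,C) = dist(λ(X),Θ). -/
theorem dist_spectral_set {n : ℕ} (Θ : Set (Fin n → ℝ))
    (hΘsym : ∀ (σ : Equiv.Perm (Fin n)) (x : Fin n → ℝ), x ∈ Θ → x ∘ σ ∈ Θ)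
    (C : Set (Matrix (Fin n) (Fin n) ℝ))
    (hC : C = {X | ∃ a : Fin n → ℝ, IsEigVec X a ∧ a ∈ Θ})
    (X : Matrix (Fin n) (Fin n) ℝ) (hX : X.IsSymm)
    (a : Fin n → ℝ) (ha : IsEigVec X a) :
    sInf ((fun Z => fnorm (X - Z)) '' C) = sInf ((fun y => vnorm (a - y)) '' Θ) :=
  dist_spectral_set_general Θ hΘsym C hC X a ha
end
end

section
/- Let C ⊆ Sⁿ be a spectral set C = {X : λ(X) ∈ Θ} with Θ symmetric, let X ∈ C and H ∈ T_C(X). Define S_H(p) = {W ∈ Sⁿ : λ″(X;H,W) + p ∈ T²_Θ(λ(X), λ′(X;H))}. Then S_H satisfies the uniform outer Lipschitz estimate S_H(p) ⊆ S_H(0) + ‖p‖·B for all p ∈ ℝⁿ, where B is the closed unit ball in Sⁿ. -/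
open Filter Topology Set Matrix

noncomputable section

/-! Take `t_k ↓ 0` and orthogonal eigenframes `V_k` of `X + t_k H + (t_k²/2) W`; along a
subsequence `V_k → U`. Put `W₀ = W + U diag(p) Uᵀ`, so `‖W - W₀‖ = ‖p‖`. Adding to the curve
`X + t H + (t²/2) W₀` the `o(t²)` correction `γ` that replaces `U` by `V_k` at `t = t_k` turns it
into `V_k diag(λ(X + t_k H + (t_k²/2) W) + (t_k²/2) p) V_kᵀ`. Hence along the corrected curve the
eigenvalues are those of the curve through `W`, shifted by `(t_k²/2) p` and permuted by some `σ`,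
which is constant on a further subsequence. Comparing second-order expansions shows that `σ` fixes
`λ(X)` and `λ′(X;H)` and that `λ″(X;H,W₀) = (λ″(X;H,W) + p) ∘ σ`, and the symmetry of `Θ` moves
`λ″(X;H,W) + p ∈ T²_Θ(λ(X), λ′(X;H))` to `λ″(X;H,W₀)`. -/

theorem exists_perm_eq_comp_of_map_univ_eq {ι α : Type*} [Fintype ι] {a b : ι → α}
    (h : Finset.univ.val.map a = Finset.univ.val.map b) : ∃ σ : Equiv.Perm ι, b = a ∘ σ := by
  classical
  have hfiber (c : α) : Fintype.card {i // b i = c} = Fintype.card {i // a i = c} := by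
    have hcount := congrArg (Multiset.count c) h
    simp only [Multiset.count_map, eq_comm (a := c)] at hcount
    rw [Fintype.card_subtype, Fintype.card_subtype]
    exact hcount.symm
  exact ⟨Equiv.ofFiberEquiv fun c => Fintype.equivOfCardEq (hfiber c),
    funext fun i => (Equiv.ofFiberEquiv_map _ i).symm⟩

theorem charpoly_mul_mul_transpose {ι R : Type*} [Fintype ι] [DecidableEq ι] [CommRing R]
    {U : Matrix ι ι R} (hU : U * Uᵀ = 1) (A : Matrix ι ι R) :
    (U * A * Uᵀ).charpoly = A.charpoly := by
  rw [Matrix.mul_assoc, charpoly_mul_comm, Matrix.mul_assoc, mul_eq_one_comm.mp hU, Matrix.mul_one]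

theorem roots_prod_X_sub_C_eq_map {ι R : Type*} [Fintype ι] [CommRing R] [IsDomain R]
    (a : ι → R) :
    (∏ i, (Polynomial.X - Polynomial.C (a i))).roots = Finset.univ.val.map a := by
  rw [← Polynomial.roots_multiset_prod_X_sub_C (Finset.univ.val.map a), Multiset.map_map]
  rfl

theorem exists_perm_eq_comp_of_conj_diagonal_eq {ι R : Type*} [Fintype ι] [DecidableEq ι]
    [CommRing R] [IsDomain R] {U V : Matrix ι ι R} {a b : ι → R}
    (hU : U * Uᵀ = 1) (hV : V * Vᵀ = 1) (h : U * diagonal a * Uᵀ = V * diagonal b * Vᵀ) :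
    ∃ σ : Equiv.Perm ι, b = a ∘ σ := by
  apply exists_perm_eq_comp_of_map_univ_eq
  have := congrArg (fun M : Matrix ι ι R => M.charpoly.roots) h
  simpa only [charpoly_mul_mul_transpose hU, charpoly_mul_mul_transpose hV, charpoly_diagonal,
    roots_prod_X_sub_C_eq_map] using this

theorem Matrix.IsSymm.mul_mul_transpose {ι R : Type*} [Fintype ι] [CommSemiring R]
    {A : Matrix ι ι R} (hA : A.IsSymm) (U : Matrix ι ι R) : (U * A * Uᵀ).IsSymm := by
  rw [IsSymm, transpose_mul, transpose_mul, transpose_transpose, hA.eq, Matrix.mul_assoc]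

theorem isCompact_setOf_mul_transpose_eq_one {ι : Type*} [Fintype ι] [DecidableEq ι] :
    IsCompact {U : Matrix ι ι ℝ | U * Uᵀ = 1} := by
  have hbox := isCompact_univ_pi fun _ : ι => isCompact_univ_pi fun _ : ι =>
    isCompact_Icc (a := (-1 : ℝ)) (b := 1)
  refine hbox.of_isClosed_subset
    (isClosed_eq (continuous_id.matrix_mul continuous_id.matrix_transpose) continuous_const) ?_
  intro (U : Matrix ι ι ℝ) (hU : U * Uᵀ = 1) i _ j _
  have hU' : U ∈ unitaryGroup ι ℝ := mem_unitaryGroup_iff.mpr <| by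
    rwa [star_eq_conjTranspose, conjTranspose_eq_transpose_of_trivial]
  exact abs_le.mp (entry_norm_bound_of_unitary hU' i j)

theorem exists_subseq_tendsto_of_mul_transpose_eq_one {ι : Type*} [Fintype ι] [DecidableEq ι]
    {V : ℕ → Matrix ι ι ℝ} (hV : ∀ k, V k * (V k)ᵀ = 1) :
    ∃ U : Matrix ι ι ℝ, U * Uᵀ = 1 ∧ ∃ φ : ℕ → ℕ, StrictMono φ ∧ Tendsto (V ∘ φ) atTop (𝓝 U) := by
  have : FirstCountableTopology (Matrix ι ι ℝ) :=
    inferInstanceAs (FirstCountableTopology (ι → ι → ℝ))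
  exact isCompact_setOf_mul_transpose_eq_one.tendsto_subseq hV

theorem sum_sq_eq_trace_mul_transpose {m ι R : Type*} [Fintype m] [Fintype ι] [CommSemiring R]
    (A : Matrix m ι R) :
    ∑ i, ∑ j, A i j ^ 2 = trace (A * Aᵀ) := by
  simp [trace, mul_apply, sq]

theorem fnorm_conj_diagonal {n : ℕ} {U : Matrix (Fin n) (Fin n) ℝ} (hU : U * Uᵀ = 1)
    (p : Fin n → ℝ) : fnorm (U * diagonal p * Uᵀ) = vnorm p := by
  have hsq : (U * diagonal p * Uᵀ) * (U * diagonal p * Uᵀ)ᵀ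
      = U * diagonal (fun i => p i * p i) * Uᵀ := by
    rw [((isSymm_diagonal p).mul_mul_transpose U).eq, ← diagonal_mul_diagonal]
    simp only [Matrix.mul_assoc, ← Matrix.mul_assoc Uᵀ, mul_eq_one_comm.mp hU, Matrix.one_mul]
  rw [fnorm, vnorm, sum_sq_eq_trace_mul_transpose, hsq, Matrix.mul_assoc, trace_mul_comm,
    Matrix.mul_assoc, mul_eq_one_comm.mp hU, Matrix.mul_one, trace_diagonal]
  simp only [sq]

theorem fnorm_neg {n : ℕ} (A : Matrix (Fin n) (Fin n) ℝ) : fnorm (-A) = fnorm A := by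
  simp [fnorm]

theorem isClosed_setOf_isSymm {ι R : Type*} [TopologicalSpace R] [T2Space R] :
    IsClosed {A : Matrix ι ι R | A.IsSymm} :=
  isClosed_eq continuous_id.matrix_transpose continuous_id

theorem isSymm_of_mem_tcone {ι : Type*} {C : Set (Matrix ι ι ℝ)} (hC : ∀ Y ∈ C, Y.IsSymm)
    {X H : Matrix ι ι ℝ} (hX : X.IsSymm) (hH : H ∈ tcone C X) : H.IsSymm := by
  obtain ⟨t, v, ht, -, hv, hmem⟩ := hH
  refine isClosed_setOf_isSymm.mem_of_tendsto hv (Eventually.of_forall fun k => ?_)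
  have hv_eq : v k = (t k)⁻¹ • (X + t k • v k - X) := by
    rw [add_sub_cancel_left, smul_smul, inv_mul_cancel₀ (ht k).ne', one_smul]
  rw [Set.mem_ofPred_eq, hv_eq]
  exact ((hC _ (hmem k)).sub hX).smul _

theorem comp_perm_mem_tcone2 {ι : Type*} {Θ : Set (ι → ℝ)} {σ : Equiv.Perm ι}
    (hΘ : ∀ y ∈ Θ, y ∘ σ ∈ Θ) {x w u : ι → ℝ} (hx : x ∘ σ = x) (hw : w ∘ σ = w)
    (hu : u ∈ tcone2 Θ x w) : u ∘ σ ∈ tcone2 Θ x w := by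
  obtain ⟨t, v, ht, ht0, hv, hmem⟩ := hu
  refine ⟨t, fun k => v k ∘ σ, ht, ht0, ?_, fun k => ?_⟩
  · exact tendsto_pi_nhds.mpr fun i => tendsto_pi_nhds.mp hv (σ i)
  · have := hΘ _ (hmem k)
    rwa [Pi.add_comp, Pi.add_comp, Pi.smul_comp, Pi.smul_comp, hx, hw] at this

theorem tendsto_extend_zero {α E : Type*} [TopologicalSpace α] [T1Space α] [TopologicalSpace E]
    [Zero E] {s : ℕ → α} (hs : Function.Injective s) {x : α} (hx : ∀ k, s k ≠ x) {f : ℕ → E}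
    (hf : Tendsto f atTop (𝓝 0)) : Tendsto (Function.extend s f 0) (𝓝 x) (𝓝 0) := by
  intro V hV
  obtain ⟨K, hK⟩ := eventually_atTop.mp (hf hV)
  have hfar : (s '' Set.Iio K)ᶜ ∈ 𝓝 x :=
    ((Set.finite_Iio K).image s).isClosed.compl_mem_nhds fun ⟨k, _, hk⟩ => hx k hk
  rw [Filter.mem_map]
  filter_upwards [hfar] with y hy
  by_cases hrange : ∃ k, s k = y
  · obtain ⟨k, rfl⟩ := hrange
    rw [Set.mem_preimage, hs.extend_apply]
    exact hK k (not_lt.mp fun hk => hy ⟨k, hk, rfl⟩)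
  · rw [Set.mem_preimage, Function.extend_apply' _ _ _ hrange]
    exact mem_of_mem_nhds hV

theorem exists_curve_apply_eq_half_sq_smul {ι : Type*} {s : ℕ → ℝ} (hs : Function.Injective s)
    (hs0 : ∀ k, s k ≠ 0) {f : ℕ → Matrix ι ι ℝ} (hf_symm : ∀ k, (f k).IsSymm)
    (hf : Tendsto f atTop (𝓝 0)) :
    ∃ γ : ℝ → Matrix ι ι ℝ, (∀ t, (γ t).IsSymm) ∧
      Tendsto (fun t : ℝ => (t ^ 2)⁻¹ • γ t) (𝓝[>] 0) (𝓝 0) ∧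
      ∀ k, γ (s k) = (s k ^ 2 / 2) • f k := by
  refine ⟨fun t => (t ^ 2 / 2) • Function.extend s f 0 t, fun t => ?_, ?_,
    fun k => by simp only [hs.extend_apply]⟩
  · refine IsSymm.smul ?_ _
    by_cases hrange : ∃ k, s k = t
    · obtain ⟨k, rfl⟩ := hrange
      rw [hs.extend_apply]
      exact hf_symm k
    · rw [Function.extend_apply' _ _ _ hrange]
      exact isSymm_zero
  · have hg := ((tendsto_extend_zero hs hs0 hf).mono_left
      (nhdsWithin_le_nhds (s := Ioi 0))).const_smul (2⁻¹ : ℝ)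
    rw [smul_zero] at hg
    refine hg.congr' ?_
    filter_upwards [self_mem_nhdsWithin] with t ht
    rw [smul_smul, inv_mul_eq_div, div_div_cancel_left' (pow_ne_zero 2 (Set.mem_Ioi.mp ht).ne')]

theorem exists_strictMono_forall_eq {α : Type*} [Finite α] (f : ℕ → α) :
    ∃ (a : α) (φ : ℕ → ℕ), StrictMono φ ∧ ∀ k, f (φ k) = a := by
  obtain ⟨a, ha⟩ := Finite.exists_infinite_fiber f
  obtain ⟨φ, hφ, hfa⟩ := extraction_of_frequently_atTop
    (Nat.frequently_atTop_iff_infinite.mpr (Set.infinite_coe_iff.mp ha))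
  exact ⟨a, φ, hφ, hfa⟩

theorem eq_of_tendsto_second_order {s : ℕ → ℝ} (hs : Tendsto s atTop (𝓝[>] 0)) {a : ℕ → ℝ}
    {x y L x' y' L' : ℝ}
    (h : Tendsto (fun k => (a k - x - s k * y) / (s k ^ 2 / 2)) atTop (𝓝 L))
    (h' : Tendsto (fun k => (a k - x' - s k * y') / (s k ^ 2 / 2)) atTop (𝓝 L')) :
    x = x' ∧ y = y' ∧ L = L' := by
  obtain ⟨hs0, hpos⟩ := tendsto_nhdsWithin_iff.mp hs
  have hne : ∀ᶠ k in atTop, s k ≠ 0 := hpos.mono fun k hk => (Set.mem_Ioi.mp hk).ne'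
  have he : Tendsto (fun k => (x' - x + s k * (y' - y)) / (s k ^ 2 / 2)) atTop (𝓝 (L - L')) := by
    refine (h.sub h').congr' ?_
    filter_upwards [hne] with k hk
    field_simp
    ring
  have hx : x' - x = 0 := by
    have hlin : Tendsto (fun k => x' - x + s k * (y' - y)) atTop (𝓝 0) := by
      have hprod : Tendsto (fun k => s k ^ 2 / 2 * ((x' - x + s k * (y' - y)) / (s k ^ 2 / 2)))
          atTop (𝓝 0) := by simpa using ((hs0.pow 2).div_const 2).mul he
      refine hprod.congr' ?_
      filter_upwards [hne] with k hk
      field_simp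
    exact tendsto_nhds_unique (by simpa using tendsto_const_nhds.add (hs0.mul_const (y' - y))) hlin
  have hy : y' - y = 0 := by
    have hlin : Tendsto (fun _ : ℕ => y' - y) atTop (𝓝 0) := by
      have hprod : Tendsto (fun k => s k / 2 * ((x' - x + s k * (y' - y)) / (s k ^ 2 / 2)))
          atTop (𝓝 0) := by simpa using (hs0.div_const 2).mul he
      refine hprod.congr' ?_
      filter_upwards [hne] with k hk
      field_simp
      rw [hx]
      ring
    exact tendsto_nhds_unique tendsto_const_nhds hlin
  have hL : L - L' = 0 := tendsto_nhds_unique he (by simp [hx, hy])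
  exact ⟨by linarith, by linarith, by linarith⟩

theorem exists_perm_of_second_order_expansions {ι : Type*} [Finite ι] {s : ℕ → ℝ}
    (hs : Tendsto s atTop (𝓝[>] 0)) {a b : ℕ → ι → ℝ} {x d L L' p : ι → ℝ}
    (ha : ∀ i, Tendsto (fun k => (a k i - x i - s k * d i) / (s k ^ 2 / 2)) atTop (𝓝 (L i)))
    (hb : ∀ i, Tendsto (fun k => (b k i - x i - s k * d i) / (s k ^ 2 / 2)) atTop (𝓝 (L' i)))
    (hab : ∀ k, ∃ σ : Equiv.Perm ι, a k = (b k + (s k ^ 2 / 2) • p) ∘ σ) :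
    ∃ σ : Equiv.Perm ι, x ∘ σ = x ∧ d ∘ σ = d ∧ L = (L' + p) ∘ σ := by
  choose σ hσ using hab
  obtain ⟨τ, φ, hφ, hτ⟩ := exists_strictMono_forall_eq σ
  have hsφ : Tendsto (s ∘ φ) atTop (𝓝[>] 0) := hs.comp hφ.tendsto_atTop
  have hcoord (i : ι) : x (τ i) = x i ∧ d (τ i) = d i ∧ L' (τ i) + p (τ i) = L i := by
    refine eq_of_tendsto_second_order hsφ (a := fun k => a (φ k) i) ?_
      ((ha i).comp hφ.tendsto_atTop)
    refine (((hb (τ i)).comp hφ.tendsto_atTop).add_const (p (τ i))).congr' ?_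
    filter_upwards [(tendsto_nhdsWithin_iff.mp hsφ).2] with k hk
    have hk : s (φ k) ≠ 0 := (Set.mem_Ioi.mp hk).ne'
    simp only [Function.comp_apply, hσ, hτ, Pi.add_apply, Pi.smul_apply, smul_eq_mul]
    field_simp
    ring
  exact ⟨τ, funext fun i => (hcoord i).1, funext fun i => (hcoord i).2.1,
    funext fun i => (hcoord i).2.2.symm⟩

theorem conj_diagonal_add_smul {ι : Type*} [Fintype ι] [DecidableEq ι] (U : Matrix ι ι ℝ)
    (a p : ι → ℝ) (c : ℝ) :
    U * diagonal a * Uᵀ + c • (U * diagonal p * Uᵀ) = U * diagonal (a + c • p) * Uᵀ := by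
  have hdiag : diagonal (a + c • p) = diagonal a + c • diagonal p := by
    rw [← diagonal_smul, diagonal_add]
    rfl
  rw [hdiag, Matrix.mul_add, Matrix.add_mul, Matrix.mul_smul, Matrix.smul_mul]

section Spectral

variable {n : ℕ} {lam lam2 : Matrix (Fin n) (Fin n) ℝ → Fin n → ℝ}

theorem exists_perm_lam_conj_diagonal
    (hlam : ∀ Y : Matrix (Fin n) (Fin n) ℝ, Y.IsSymm → IsEigVec Y (lam Y))
    {U : Matrix (Fin n) (Fin n) ℝ} (hU : U * Uᵀ = 1) (a : Fin n → ℝ) :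
    ∃ σ : Equiv.Perm (Fin n), lam (U * diagonal a * Uᵀ) = a ∘ σ := by
  obtain ⟨V, hV, hdecomp⟩ := (hlam _ ((isSymm_diagonal a).mul_mul_transpose U)).2
  exact exists_perm_eq_comp_of_conj_diagonal_eq hU hV hdecomp

theorem exists_perm_lam2_add_conj_diagonal
    (hlam : ∀ Y : Matrix (Fin n) (Fin n) ℝ, Y.IsSymm → IsEigVec Y (lam Y))
    {X H W : Matrix (Fin n) (Fin n) ℝ} (hX : X.IsSymm) (hH : H.IsSymm) (hW : W.IsSymm)
    {d : Fin n → ℝ}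
    (hexp : ∀ W' : Matrix (Fin n) (Fin n) ℝ, W'.IsSymm →
      ∀ γ : ℝ → Matrix (Fin n) (Fin n) ℝ, (∀ t, (γ t).IsSymm) →
      Tendsto (fun t : ℝ => (t ^ 2)⁻¹ • γ t) (𝓝[>] 0) (𝓝 0) →
      ∀ i, Tendsto
        (fun t : ℝ =>
          (lam (X + t • H + (t ^ 2 / 2) • W' + γ t) i - lam X i - t * d i) / (t ^ 2 / 2))
        (𝓝[>] 0) (𝓝 (lam2 W' i)))
    (p : Fin n → ℝ) :
    ∃ U : Matrix (Fin n) (Fin n) ℝ, U * Uᵀ = 1 ∧ ∃ σ : Equiv.Perm (Fin n),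
      lam X ∘ σ = lam X ∧ d ∘ σ = d ∧ lam2 (W + U * diagonal p * Uᵀ) = (lam2 W + p) ∘ σ := by
  set A : ℝ → Matrix (Fin n) (Fin n) ℝ := fun t => X + t • H + (t ^ 2 / 2) • W
  choose V hV hVA using fun k : ℕ =>
    (hlam (A (1 / (k + 1))) ((hX.add (hH.smul _)).add (hW.smul _))).2
  obtain ⟨U, hU, φ, hφ, hVU⟩ := exists_subseq_tendsto_of_mul_transpose_eq_one hV
  set s : ℕ → ℝ := fun k => 1 / (φ k + 1)
  have hs_pos (k : ℕ) : 0 < s k := Nat.one_div_pos_of_nat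
  have hs_inj : Function.Injective s := fun k l hkl => hφ.injective (by simpa [s] using hkl)
  have hs : Tendsto s atTop (𝓝[>] 0) := tendsto_nhdsWithin_iff.mpr
    ⟨tendsto_one_div_add_atTop_nhds_zero_nat.comp hφ.tendsto_atTop, .of_forall hs_pos⟩
  set Δ := U * diagonal p * Uᵀ
  set Q : ℕ → Matrix (Fin n) (Fin n) ℝ := fun k => V (φ k) * diagonal p * (V (φ k))ᵀ
  have hQ : Tendsto (fun k => Q k - Δ) atTop (𝓝 0) := by
    have hcont : Continuous fun M : Matrix (Fin n) (Fin n) ℝ => M * diagonal p * Mᵀ :=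
      (continuous_id.matrix_mul continuous_const).matrix_mul continuous_id.matrix_transpose
    rw [← sub_self Δ]
    exact ((hcont.tendsto U).comp hVU).sub_const Δ
  obtain ⟨γ, hγ_symm, hγ, hγ_eq⟩ := exists_curve_apply_eq_half_sq_smul hs_inj
    (fun k => (hs_pos k).ne') (fun k => ((isSymm_diagonal p).mul_mul_transpose _).sub
      ((isSymm_diagonal p).mul_mul_transpose U)) hQ
  have hcurve (k : ℕ) : X + s k • H + (s k ^ 2 / 2) • (W + Δ) + γ (s k)
      = V (φ k) * Matrix.diagonal (lam (A (s k)) + (s k ^ 2 / 2) • p) * (V (φ k))ᵀ := by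
    rw [← conj_diagonal_add_smul, ← hVA (φ k), hγ_eq]
    simp only [A]
    module
  refine ⟨U, hU, exists_perm_of_second_order_expansions hs (b := fun k => lam (A (s k)))
    (fun i => (hexp _ (hW.add ((isSymm_diagonal p).mul_mul_transpose U)) γ hγ_symm hγ i).comp hs)
    (fun i => ?_) (fun k => ?_)⟩
  · have hb := (hexp W hW 0 (fun _ => isSymm_zero) (by simp) i).comp hs
    simp only [Pi.zero_apply, add_zero] at hb
    exact hb
  · rw [hcurve k]
    exact exists_perm_lam_conj_diagonal hlam (hV _) _

end Spectral

theorem SH_outer_lipschitz_general {n : ℕ}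
    (Θ : Set (Fin n → ℝ))
    (hΘsym : ∀ (σ : Equiv.Perm (Fin n)) (x : Fin n → ℝ), x ∈ Θ → x ∘ σ ∈ Θ)
    (lam : Matrix (Fin n) (Fin n) ℝ → Fin n → ℝ)
    (hlam : ∀ X : Matrix (Fin n) (Fin n) ℝ, X.IsSymm → IsEigVec X (lam X))
    (C : Set (Matrix (Fin n) (Fin n) ℝ))
    (hC : C = {X | X.IsSymm ∧ lam X ∈ Θ})
    (X : Matrix (Fin n) (Fin n) ℝ) (hXC : X ∈ C)
    (H : Matrix (Fin n) (Fin n) ℝ) (hHt : H ∈ tcone C X)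
    (d : Fin n → ℝ)
    (lam2 : Matrix (Fin n) (Fin n) ℝ → Fin n → ℝ)
    (hexp : ∀ W : Matrix (Fin n) (Fin n) ℝ, W.IsSymm →
      ∀ γ : ℝ → Matrix (Fin n) (Fin n) ℝ, (∀ t, (γ t).IsSymm) →
      Filter.Tendsto (fun t : ℝ => (t ^ 2)⁻¹ • γ t) (nhdsWithin 0 (Set.Ioi 0)) (nhds 0) →
      ∀ i, Filter.Tendsto
        (fun t : ℝ =>
          (lam (X + t • H + (t ^ 2 / 2) • W + γ t) i - lam X i - t * d i) / (t ^ 2 / 2))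
        (nhdsWithin 0 (Set.Ioi 0)) (nhds (lam2 W i)))
    (p : Fin n → ℝ) (W : Matrix (Fin n) (Fin n) ℝ)
    (hW : W.IsSymm ∧ (fun i => lam2 W i + p i) ∈ tcone2 Θ (lam X) d) :
    ∃ W₀ : Matrix (Fin n) (Fin n) ℝ,
      (W₀.IsSymm ∧ lam2 W₀ ∈ tcone2 Θ (lam X) d) ∧ fnorm (W - W₀) ≤ vnorm p := by
  subst hC
  have hH : H.IsSymm := isSymm_of_mem_tcone (fun Y hY => hY.1) hXC.1 hHt
  obtain ⟨U, hU, σ, hσX, hσd, hσ⟩ :=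
    exists_perm_lam2_add_conj_diagonal hlam hXC.1 hH hW.1 hexp p
  refine ⟨W + U * diagonal p * Uᵀ, ⟨hW.1.add ((isSymm_diagonal p).mul_mul_transpose U), ?_⟩, ?_⟩
  · rw [hσ]
    exact comp_perm_mem_tcone2 (hΘsym σ) hσX hσd hW.2
  · rw [sub_add_cancel_left, fnorm_neg, fnorm_conj_diagonal hU]

/-- the second-order tangential approximation mapping
S_H(p) = {W : λ″(X;H,W) + p ∈ T²_Θ(λ(X),λ′(X;H))} of a spectral set satisfies the
uniform outer Lipschitz estimate S_H(p) ⊆ S_H(0) + ‖p‖·B. -/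
theorem SH_outer_lipschitz {n : ℕ}
    (Θ : Set (Fin n → ℝ))
    (hΘsym : ∀ (σ : Equiv.Perm (Fin n)) (x : Fin n → ℝ), x ∈ Θ → x ∘ σ ∈ Θ)
    (lam : Matrix (Fin n) (Fin n) ℝ → Fin n → ℝ)
    (hlam : ∀ X : Matrix (Fin n) (Fin n) ℝ, X.IsSymm → IsEigVec X (lam X))
    (C : Set (Matrix (Fin n) (Fin n) ℝ))
    (hC : C = {X | X.IsSymm ∧ lam X ∈ Θ})
    (X : Matrix (Fin n) (Fin n) ℝ) (hXC : X ∈ C)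
    (H : Matrix (Fin n) (Fin n) ℝ) (hHt : H ∈ tcone C X)
    (d : Fin n → ℝ)
    (hd : ∀ i, Filter.Tendsto (fun t : ℝ => (lam (X + t • H) i - lam X i) / t)
      (nhdsWithin 0 (Set.Ioi 0)) (nhds (d i)))
    (lam2 : Matrix (Fin n) (Fin n) ℝ → Fin n → ℝ)
    (hexp : ∀ W : Matrix (Fin n) (Fin n) ℝ, W.IsSymm →
      ∀ γ : ℝ → Matrix (Fin n) (Fin n) ℝ, (∀ t, (γ t).IsSymm) →
      Filter.Tendsto (fun t : ℝ => (t ^ 2)⁻¹ • γ t) (nhdsWithin 0 (Set.Ioi 0)) (nhds 0) →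
      ∀ i, Filter.Tendsto
        (fun t : ℝ =>
          (lam (X + t • H + (t ^ 2 / 2) • W + γ t) i - lam X i - t * d i) / (t ^ 2 / 2))
        (nhdsWithin 0 (Set.Ioi 0)) (nhds (lam2 W i)))
    (p : Fin n → ℝ) (W : Matrix (Fin n) (Fin n) ℝ)
    (hW : W.IsSymm ∧ (fun i => lam2 W i + p i) ∈ tcone2 Θ (lam X) d) :
    ∃ W₀ : Matrix (Fin n) (Fin n) ℝ,
      (W₀.IsSymm ∧ lam2 W₀ ∈ tcone2 Θ (lam X) d) ∧ fnorm (W - W₀) ≤ vnorm p :=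
  SH_outer_lipschitz_general Θ hΘsym lam hlam C hC X hXC H hHt d lam2 hexp p W hW
end
end

section
/- Let C ⊆ Sⁿ be a spectral set C = {X : λ(X) ∈ Θ} with Θ ⊆ ℝⁿ symmetric, X ∈ C and H ∈ T_C(X). Then the second-order tangent set satisfies the chain rule T²_C(X,H) = {W ∈ Sⁿ : λ″(X;H,W) ∈ T²_Θ(λ(X), λ′(X;H))}. -/
open Filter Topology Set Matrix

noncomputable section

/-! Both inclusions are proved on the sequences defining `T²`.  From `C` to `Θ`: after passing to
a strictly decreasing subsequence of step sizes, the second-order perturbation becomes a function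
of `t`, so the expansion of `λ` along `X + tH + ½t²W + o(t²)` applies.  From `Θ` to `C`: sort the
points `y_k ∈ Θ` and put them on an eigenbasis of `A_k = X + t_k H + ½t_k² W`.  Sorting is
`1`-Lipschitz for the sup norm and fixes `λ(A_k)`, so the resulting matrices lie in `C` and
differ from `A_k` by `o(t_k²)`. -/

namespace Matrix

def symmetricSubmodule (R n : Type*) [Semiring R] : Submodule R (Matrix n n R) where
  carrier := {A | A.IsSymm}
  add_mem' := IsSymm.add
  zero_mem' := isSymm_zero
  smul_mem' c _ hA := hA.smul c

lemma isClosed_symmetricSubmodule (R n : Type*) [Semiring R] [TopologicalSpace R] [T2Space R] :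
    IsClosed (symmetricSubmodule R n : Set (Matrix n n R)) :=
  isClosed_eq continuous_id.matrix_transpose continuous_id

end Matrix

lemma Submodule.mem_of_add_smul_mem {E : Type*} [AddCommGroup E] [Module ℝ E] (S : Submodule ℝ E)
    {x v : E} {c : ℝ} (hc : c ≠ 0) (hx : x ∈ S) (h : x + c • v ∈ S) : v ∈ S :=
  (S.smul_mem_iff hc).mp ((S.add_mem_iff_right hx).mp h)

section TangentCones

variable {E : Type*} [AddCommGroup E] [Module ℝ E] [TopologicalSpace E]
  {S : Submodule ℝ E} {C : Set E}

lemma tcone_subset_of_subset (hS : IsClosed (S : Set E)) (hC : C ⊆ S) {x : E} (hx : x ∈ S) :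
    tcone C x ⊆ S := by
  rintro w ⟨t, v, ht, -, hv, hmem⟩
  exact hS.mem_of_tendsto hv (Eventually.of_forall fun k =>
    S.mem_of_add_smul_mem (ht k).ne' hx (hC (hmem k)))

lemma tcone2_subset_of_subset (hS : IsClosed (S : Set E)) (hC : C ⊆ S) {x w : E} (hx : x ∈ S)
    (hw : w ∈ S) : tcone2 C x w ⊆ S := by
  rintro u ⟨t, v, ht, -, hv, hmem⟩
  exact hS.mem_of_tendsto hv (Eventually.of_forall fun k =>
    S.mem_of_add_smul_mem (by positivity [ht k]) (S.add_mem hx (S.smul_mem _ hw)) (hC (hmem k)))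

end TangentCones

section Sorting

variable {n : ℕ}

lemma exists_perm_antitone_comp {α : Type*} [LinearOrder α] (x : Fin n → α) :
    ∃ σ : Equiv.Perm (Fin n), Antitone (x ∘ σ) :=
  ⟨Fin.revPerm.trans (Tuple.sort x), (Tuple.monotone_sort x).comp_antitone fun _ _ h =>
    Fin.rev_le_rev.mpr h⟩

lemma Antitone.le_of_le_comp_perm {α : Type*} [Preorder α] {a b : Fin n → α} (ha : Antitone a)
    (hb : Antitone b) (σ : Equiv.Perm (Fin n)) (h : ∀ j, a j ≤ b (σ j)) (i : Fin n) :
    a i ≤ b i := by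
  -- pigeonhole: `σ` cannot map the `i + 1` indices `j ≤ i` into the `i` indices below `i`
  obtain ⟨j, hji, hij⟩ : ∃ j ≤ i, i ≤ σ j := by
    by_contra! hlt
    have := Finset.card_le_card_of_injOn σ (fun j hj => Finset.mem_Iio.mpr
      (hlt j (Finset.mem_Iic.mp hj))) σ.injective.injOn
    simp only [Fin.card_Iic, Fin.card_Iio] at this
    omega
  exact (ha hji).trans ((h j).trans (hb hij))

lemma norm_comp_perm_sub_le {a y : Fin n → ℝ} (ha : Antitone a) (σ : Equiv.Perm (Fin n))
    (hy : Antitone (y ∘ σ)) : ‖y ∘ σ - a‖ ≤ ‖y - a‖ := by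
  have hle : ∀ j, |y j - a j| ≤ ‖y - a‖ := fun j => norm_le_pi_norm (y - a) j
  refine (pi_norm_le_iff_of_nonneg (norm_nonneg _)).mpr fun i => abs_le.mpr ⟨?_, ?_⟩
  · have := (ha.add_const (-‖y - a‖)).le_of_le_comp_perm hy σ.symm fun j => by
      simp only [Function.comp_apply, Equiv.apply_symm_apply]
      linarith [(abs_le.mp (hle j)).1]
    simp only [Function.comp_apply, Pi.sub_apply] at this ⊢
    linarith [this i]
  · have := hy.le_of_le_comp_perm (ha.add_const ‖y - a‖) σ fun j => by
      simp only [Function.comp_apply]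
      linarith [(abs_le.mp (hle (σ j))).2]
    simp only [Function.comp_apply, Pi.sub_apply] at this ⊢
    linarith [this i]

end Sorting

namespace IsEigVec

variable {n : ℕ} {M : Matrix (Fin n) (Fin n) ℝ} {a b : Fin n → ℝ}

lemma antitone (h : IsEigVec M a) : Antitone a := fun i j hij => h.1 i j hij

lemma isSymm_s10 (h : IsEigVec M a) : M.IsSymm := by
  obtain ⟨-, U, -, rfl⟩ := h
  simp [IsSymm, transpose_mul, Matrix.mul_assoc]

open Polynomial in
lemma charpoly_eq (h : IsEigVec M a) : M.charpoly = ∏ i, (X - C (a i)) := by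
  obtain ⟨-, U, hU, rfl⟩ := h
  rw [charpoly_mul_comm, ← Matrix.mul_assoc, mul_eq_one_comm.mp hU, Matrix.one_mul,
    charpoly_diagonal]

open Polynomial in
lemma eq (ha : IsEigVec M a) (hb : IsEigVec M b) : a = b := by
  have hroots : ∀ c : Fin n → ℝ, (∏ i, (X - C (c i))).roots = ↑(List.ofFn c) := fun c => by
    simpa [Finset.prod_eq_multiset_prod, Function.comp_def, Fin.univ_val_map] using
      roots_multiset_prod_X_sub_C (Finset.univ.val.map c)
  have hperm : (List.ofFn a).Perm (List.ofFn b) := by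
    rw [← Multiset.coe_eq_coe, ← hroots, ← hroots, ← ha.charpoly_eq, ← hb.charpoly_eq]
  have hsorted : ∀ {c : Fin n → ℝ}, Antitone c → (List.ofFn c).Pairwise (· ≥ ·) := fun hc =>
    List.pairwise_ofFn.mpr fun _ _ hij => hc hij.le
  exact List.ofFn_injective (hperm.eq_of_pairwise' (hsorted ha.antitone) (hsorted hb.antitone))

end IsEigVec

lemma tendsto_conj_diagonal_zero {ι m : Type*} [Fintype m] [DecidableEq m] {l : Filter ι}
    {U : ι → Matrix m m ℝ} (hU : ∀ k, U k * (U k)ᵀ = 1) {e : ι → m → ℝ}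
    (he : Tendsto e l (𝓝 0)) : Tendsto (fun k => U k * diagonal (e k) * (U k)ᵀ) l (𝓝 0) := by
  have hUbound : ∀ k p q, |U k p q| ≤ 1 := fun k =>
    entry_norm_bound_of_unitary (mem_unitaryGroup_iff.mpr (hU k))
  have hterm : ∀ k p q j, ‖U k p j * e k j * U k q j‖ ≤ |e k j| := fun k p q j => by
    rw [Real.norm_eq_abs, abs_mul, abs_mul]
    exact (mul_le_of_le_one_right (by positivity) (hUbound k q j)).trans
      (mul_le_of_le_one_left (abs_nonneg _) (hUbound k p j))
  have he' : ∀ j, Tendsto (fun k => |e k j|) l (𝓝 0) := fun j => by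
    simpa using (((continuous_apply j).tendsto (0 : m → ℝ)).comp he).abs
  refine tendsto_pi_nhds.mpr fun p => tendsto_pi_nhds.mpr fun q => ?_
  simp only [Matrix.mul_apply (M := _ * _), mul_diagonal, transpose_apply]
  simpa using tendsto_finsetSum (Finset.univ : Finset m) fun j _ =>
    squeeze_zero_norm (hterm · p q j) (he' j)

lemma exists_isEigVec_comp_perm_tendsto {n : ℕ} {ι : Type*} {l : Filter ι}
    {A : ι → Matrix (Fin n) (Fin n) ℝ} {a y : ι → Fin n → ℝ} {c : ι → ℝ}
    (hA : ∀ k, IsEigVec (A k) (a k)) (hy : Tendsto (fun k => (c k)⁻¹ • (y k - a k)) l (𝓝 0)) :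
    ∃ (M : ι → Matrix (Fin n) (Fin n) ℝ) (σ : ι → Equiv.Perm (Fin n)),
      (∀ k, IsEigVec (M k) (y k ∘ σ k)) ∧ Tendsto (fun k => (c k)⁻¹ • (M k - A k)) l (𝓝 0) := by
  choose U hU hAU using fun k => (hA k).2
  choose σ hσ using fun k => exists_perm_antitone_comp (y k)
  refine ⟨fun k => U k * diagonal (y k ∘ σ k) * (U k)ᵀ, σ,
    fun k => ⟨fun i j hij => hσ k hij, U k, hU k, rfl⟩, ?_⟩
  have hconj : ∀ k, (c k)⁻¹ • (U k * diagonal (y k ∘ σ k) * (U k)ᵀ - A k) =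
      U k * diagonal ((c k)⁻¹ • (y k ∘ σ k - a k)) * (U k)ᵀ := fun k => by
    rw [hAU k, ← Matrix.sub_mul, ← Matrix.mul_sub, diagonal_smul, diagonal_sub, Matrix.mul_smul,
      Matrix.smul_mul]
    rfl
  simp only [hconj]
  refine tendsto_conj_diagonal_zero hU
    (squeeze_zero_norm (fun k => ?_) (tendsto_zero_iff_norm_tendsto_zero.mp hy))
  rw [norm_smul, norm_smul]
  exact mul_le_mul_of_nonneg_left (norm_comp_perm_sub_le (hA k).antitone _ (hσ k)) (norm_nonneg _)

lemma exists_strictAnti_subseq_of_tendsto_zero {t : ℕ → ℝ} (ht : ∀ k, 0 < t k)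
    (ht0 : Tendsto t atTop (𝓝 0)) : ∃ φ : ℕ → ℕ, StrictMono φ ∧ StrictAnti (t ∘ φ) := by
  have htGT : Tendsto t atTop (𝓝[>] 0) :=
    tendsto_nhdsWithin_of_tendsto_nhds_of_eventually_within t ht0 (.of_forall ht)
  obtain ⟨φ, hφ, hinv⟩ := strictMono_subseq_of_tendsto_atTop (tendsto_inv_nhdsGT_zero.comp htGT)
  exact ⟨φ, hφ, fun a b hab => (inv_lt_inv₀ (ht _) (ht _)).mp (hinv hab)⟩

lemma StrictAnti.exists_extend_tendsto_zero {E : Type*} [TopologicalSpace E] [Zero E] {S : Set E}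
    (h0 : (0 : E) ∈ S) {s : ℕ → ℝ} (hsa : StrictAnti s) (hs : ∀ k, 0 < s k) {f : ℕ → E}
    (hf : Tendsto f atTop (𝓝 0)) (hfS : ∀ k, f k ∈ S) :
    ∃ g : ℝ → E, (∀ k, g (s k) = f k) ∧ (∀ r, g r ∈ S) ∧ Tendsto g (𝓝[>] 0) (𝓝 0) := by
  classical
  refine ⟨fun r => if h : ∃ k, s k = r then f h.choose else 0, fun k => ?_, fun r => ?_, ?_⟩
  · have h : ∃ j, s j = s k := ⟨k, rfl⟩
    simp only [dif_pos h, hsa.injective h.choose_spec]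
  · dsimp only
    split_ifs
    exacts [hfS _, h0]
  · refine fun V hV => mem_map.mpr ?_
    obtain ⟨N, hN⟩ := eventually_atTop.mp (hf hV)
    filter_upwards [Ioo_mem_nhdsGT (hs N)] with r hr
    simp only [mem_preimage]
    split_ifs with h
    · exact hN _ (hsa.lt_iff_gt.mp (h.choose_spec.symm ▸ hr.2)).le
    · exact mem_of_mem_nhds hV

section SecondOrderExpansion

variable {n : ℕ} {lam lam2 : Matrix (Fin n) (Fin n) ℝ → Fin n → ℝ}
  {X H W : Matrix (Fin n) (Fin n) ℝ} {d : Fin n → ℝ}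

/-- `d` stands for `λ′(X;H)` and `lam2 W` for `λ″(X;H,W)`, tested only on symmetric curves. -/
def HasSecondOrderExpansion (lam : Matrix (Fin n) (Fin n) ℝ → Fin n → ℝ)
    (X H : Matrix (Fin n) (Fin n) ℝ) (d : Fin n → ℝ)
    (lam2 : Matrix (Fin n) (Fin n) ℝ → Fin n → ℝ) : Prop :=
  ∀ W : Matrix (Fin n) (Fin n) ℝ, W.IsSymm →
    ∀ γ : ℝ → Matrix (Fin n) (Fin n) ℝ, (∀ t, (γ t).IsSymm) →
    Tendsto (fun t : ℝ => (t ^ 2)⁻¹ • γ t) (𝓝[>] 0) (𝓝 0) →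
    ∀ i, Tendsto
      (fun t : ℝ => (lam (X + t • H + (t ^ 2 / 2) • W + γ t) i - lam X i - t * d i) / (t ^ 2 / 2))
      (𝓝[>] 0) (𝓝 (lam2 W i))

namespace HasSecondOrderExpansion

lemma tendsto (h : HasSecondOrderExpansion lam X H d lam2) (hW : W.IsSymm)
    {γ : ℝ → Matrix (Fin n) (Fin n) ℝ} (hγ : ∀ t, (γ t).IsSymm)
    (hγ0 : Tendsto (fun t : ℝ => (t ^ 2)⁻¹ • γ t) (𝓝[>] 0) (𝓝 0)) :
    Tendsto (fun t : ℝ => (t ^ 2 / 2)⁻¹ • (lam (X + t • H + (t ^ 2 / 2) • W + γ t) - lam X - t • d))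
      (𝓝[>] 0) (𝓝 (lam2 W)) :=
  tendsto_pi_nhds.mpr fun i => by
    simpa only [Pi.smul_apply, Pi.sub_apply, smul_eq_mul, div_eq_inv_mul]
      using h W hW γ hγ hγ0 i

lemma tendsto_seq (h : HasSecondOrderExpansion lam X H d lam2) (hW : W.IsSymm) {s : ℕ → ℝ}
    (hs : ∀ k, 0 < s k) (hsa : StrictAnti s) (hs0 : Tendsto s atTop (𝓝 0))
    {u : ℕ → Matrix (Fin n) (Fin n) ℝ} (hu : Tendsto u atTop (𝓝 W)) (hus : ∀ k, (u k).IsSymm) :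
    Tendsto (fun k => (s k ^ 2 / 2)⁻¹ •
      (lam (X + s k • H + (s k ^ 2 / 2) • u k) - lam X - s k • d)) atTop (𝓝 (lam2 W)) := by
  obtain ⟨g, hgs, hgS, hg0⟩ := hsa.exists_extend_tendsto_zero
    (S := {A : Matrix (Fin n) (Fin n) ℝ | A.IsSymm}) isSymm_zero hs
    (f := fun k => (2 : ℝ)⁻¹ • (u k - W))
    (by simpa using (hu.sub_const W).const_smul (2 : ℝ)⁻¹)
    fun k => ((hus k).sub hW).smul (2 : ℝ)⁻¹
  have hγ0 : Tendsto (fun t : ℝ => (t ^ 2)⁻¹ • t ^ 2 • g t) (𝓝[>] 0) (𝓝 0) :=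
    hg0.congr' (eventually_nhdsWithin_of_forall fun t ht =>
      (inv_smul_smul₀ (pow_ne_zero 2 (ne_of_gt ht)) _).symm)
  have hsGT : Tendsto s atTop (𝓝[>] 0) :=
    tendsto_nhdsWithin_of_tendsto_nhds_of_eventually_within s hs0 (.of_forall hs)
  refine ((h.tendsto hW (fun t => (hgS t).smul _) hγ0).comp hsGT).congr fun k => ?_
  have hpert : X + s k • H + (s k ^ 2 / 2) • W + s k ^ 2 • g (s k) =
      X + s k • H + (s k ^ 2 / 2) • u k := by
    rw [hgs k]
    module
  simp only [Function.comp_apply, hpert]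

end HasSecondOrderExpansion

end SecondOrderExpansion

section SpectralSets

variable {n : ℕ} {Θ : Set (Fin n → ℝ)} {lam lam2 : Matrix (Fin n) (Fin n) ℝ → Fin n → ℝ}
  {X H W : Matrix (Fin n) (Fin n) ℝ} {d : Fin n → ℝ}

lemma HasSecondOrderExpansion.lam2_mem_tcone2 (h : HasSecondOrderExpansion lam X H d lam2)
    (hX : X.IsSymm) (hH : H.IsSymm) (hW : W.IsSymm)
    (hWC : W ∈ tcone2 {A | A.IsSymm ∧ lam A ∈ Θ} X H) : lam2 W ∈ tcone2 Θ (lam X) d := by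
  obtain ⟨t, v, ht, ht0, hv, hmem⟩ := hWC
  obtain ⟨φ, hφ, hanti⟩ := exists_strictAnti_subseq_of_tendsto_zero ht ht0
  have hvS : ∀ k, (v k).IsSymm := fun k =>
    (symmetricSubmodule ℝ (Fin n)).mem_of_add_smul_mem (by positivity [ht k])
      (hX.add (hH.smul (t k))) (hmem k).1
  refine ⟨t ∘ φ, _, fun k => ht _, ht0.comp hφ.tendsto_atTop,
    h.tendsto_seq hW (fun k => ht _) hanti (ht0.comp hφ.tendsto_atTop) (hv.comp hφ.tendsto_atTop)
      (fun k => hvS _), fun k => ?_⟩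
  rw [Function.comp_apply, smul_inv_smul₀ (by positivity [ht (φ k)])]
  simpa using (hmem (φ k)).2

lemma HasSecondOrderExpansion.mem_tcone2_of_lam2_mem
    (h : HasSecondOrderExpansion lam X H d lam2)
    (hΘ : ∀ (σ : Equiv.Perm (Fin n)) (x : Fin n → ℝ), x ∈ Θ → x ∘ σ ∈ Θ)
    (hlam : ∀ A : Matrix (Fin n) (Fin n) ℝ, A.IsSymm → IsEigVec A (lam A))
    (hX : X.IsSymm) (hH : H.IsSymm) (hW : W.IsSymm) (hWΘ : lam2 W ∈ tcone2 Θ (lam X) d) :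
    W ∈ tcone2 {A | A.IsSymm ∧ lam A ∈ Θ} X H := by
  obtain ⟨s, z, hs, hs0, hz, hmem⟩ := hWΘ
  set A : ℕ → Matrix (Fin n) (Fin n) ℝ := fun k => X + s k • H + (s k ^ 2 / 2) • W
  have hA : ∀ k, IsEigVec (A k) (lam (A k)) := fun k =>
    hlam _ ((hX.add (hH.smul _)).add (hW.smul _))
  have hexpand : Tendsto (fun k => (s k ^ 2 / 2)⁻¹ • (lam (A k) - lam X - s k • d)) atTop
      (𝓝 (lam2 W)) := by
    have h0 := h.tendsto hW (γ := 0) (fun _ => isSymm_zero) (by simp)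
    simpa only [Pi.zero_apply, add_zero, Function.comp_def] using h0.comp
      (tendsto_nhdsWithin_of_tendsto_nhds_of_eventually_within s hs0 (.of_forall hs))
  have hgap : Tendsto (fun k => (s k ^ 2 / 2)⁻¹ •
      ((lam X + s k • d + (s k ^ 2 / 2) • z k) - lam (A k))) atTop (𝓝 0) := by
    have hdiff := hz.sub hexpand
    rw [sub_self] at hdiff
    refine hdiff.congr fun k => ?_
    rw [show lam X + s k • d + (s k ^ 2 / 2) • z k - lam (A k) =
        (s k ^ 2 / 2) • z k - (lam (A k) - lam X - s k • d) by abel,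
      smul_sub _ ((s k ^ 2 / 2) • z k), inv_smul_smul₀ (by positivity [hs k])]
  obtain ⟨M, σ, hM, hMA⟩ := exists_isEigVec_comp_perm_tendsto hA hgap
  refine ⟨s, fun k => W + (s k ^ 2 / 2)⁻¹ • (M k - A k), hs, hs0,
    by simpa using tendsto_const_nhds.add hMA, fun k => ?_⟩
  have hMk : X + s k • H + (s k ^ 2 / 2) • (W + (s k ^ 2 / 2)⁻¹ • (M k - A k)) = M k := by
    rw [smul_add, smul_inv_smul₀ (by positivity [hs k]), ← add_assoc]
    exact add_sub_cancel (A k) (M k)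
  rw [hMk, mem_ofPred_eq, (hlam _ (hM k).isSymm_s10).eq (hM k)]
  exact ⟨(hM k).isSymm_s10, hΘ _ _ (hmem k)⟩

end SpectralSets

theorem second_tangent_spectral_chain_rule_general {n : ℕ}
    (Θ : Set (Fin n → ℝ))
    (hΘsym : ∀ (σ : Equiv.Perm (Fin n)) (x : Fin n → ℝ), x ∈ Θ → x ∘ σ ∈ Θ)
    (lam : Matrix (Fin n) (Fin n) ℝ → Fin n → ℝ)
    (hlam : ∀ X : Matrix (Fin n) (Fin n) ℝ, X.IsSymm → IsEigVec X (lam X))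
    (C : Set (Matrix (Fin n) (Fin n) ℝ))
    (hC : C = {X | X.IsSymm ∧ lam X ∈ Θ})
    (X : Matrix (Fin n) (Fin n) ℝ) (hXC : X ∈ C)
    (H : Matrix (Fin n) (Fin n) ℝ) (hHt : H ∈ tcone C X)
    (d : Fin n → ℝ)
    (lam2 : Matrix (Fin n) (Fin n) ℝ → Fin n → ℝ)
    (hexp : ∀ W : Matrix (Fin n) (Fin n) ℝ, W.IsSymm →
      ∀ γ : ℝ → Matrix (Fin n) (Fin n) ℝ, (∀ t, (γ t).IsSymm) →
      Filter.Tendsto (fun t : ℝ => (t ^ 2)⁻¹ • γ t) (nhdsWithin 0 (Set.Ioi 0)) (nhds 0) →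
      ∀ i, Filter.Tendsto
        (fun t : ℝ =>
          (lam (X + t • H + (t ^ 2 / 2) • W + γ t) i - lam X i - t * d i) / (t ^ 2 / 2))
        (nhdsWithin 0 (Set.Ioi 0)) (nhds (lam2 W i))) :
    tcone2 C X H = {W | W.IsSymm ∧ lam2 W ∈ tcone2 Θ (lam X) d} := by
  subst hC
  have hCS : {A | A.IsSymm ∧ lam A ∈ Θ} ⊆ (symmetricSubmodule ℝ (Fin n) : Set _) :=
    fun _ hA => hA.1
  have hX : X.IsSymm := hXC.1
  have hH : H.IsSymm := tcone_subset_of_subset (isClosed_symmetricSubmodule ℝ _) hCS hX hHt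
  ext W
  constructor
  · intro hWC
    have hW : W.IsSymm := tcone2_subset_of_subset (isClosed_symmetricSubmodule ℝ _) hCS hX hH hWC
    exact ⟨hW, HasSecondOrderExpansion.lam2_mem_tcone2 hexp hX hH hW hWC⟩
  · rintro ⟨hW, hWΘ⟩
    exact HasSecondOrderExpansion.mem_tcone2_of_lam2_mem hexp hΘsym hlam hX hH hW hWΘ

/-- chain rule for second-order tangent sets of spectral sets:
T²_C(X,H) = {W : λ″(X;H,W) ∈ T²_Θ(λ(X),λ′(X;H))}. -/
theorem second_tangent_spectral_chain_rule {n : ℕ}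
    (Θ : Set (Fin n → ℝ))
    (hΘsym : ∀ (σ : Equiv.Perm (Fin n)) (x : Fin n → ℝ), x ∈ Θ → x ∘ σ ∈ Θ)
    (lam : Matrix (Fin n) (Fin n) ℝ → Fin n → ℝ)
    (hlam : ∀ X : Matrix (Fin n) (Fin n) ℝ, X.IsSymm → IsEigVec X (lam X))
    (C : Set (Matrix (Fin n) (Fin n) ℝ))
    (hC : C = {X | X.IsSymm ∧ lam X ∈ Θ})
    (X : Matrix (Fin n) (Fin n) ℝ) (hXC : X ∈ C)
    (H : Matrix (Fin n) (Fin n) ℝ) (hHt : H ∈ tcone C X)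
    (d : Fin n → ℝ)
    (hd : ∀ i, Filter.Tendsto (fun t : ℝ => (lam (X + t • H) i - lam X i) / t)
      (nhdsWithin 0 (Set.Ioi 0)) (nhds (d i)))
    (lam2 : Matrix (Fin n) (Fin n) ℝ → Fin n → ℝ)
    (hexp : ∀ W : Matrix (Fin n) (Fin n) ℝ, W.IsSymm →
      ∀ γ : ℝ → Matrix (Fin n) (Fin n) ℝ, (∀ t, (γ t).IsSymm) →
      Filter.Tendsto (fun t : ℝ => (t ^ 2)⁻¹ • γ t) (nhdsWithin 0 (Set.Ioi 0)) (nhds 0) →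
      ∀ i, Filter.Tendsto
        (fun t : ℝ =>
          (lam (X + t • H + (t ^ 2 / 2) • W + γ t) i - lam X i - t * d i) / (t ^ 2 / 2))
        (nhdsWithin 0 (Set.Ioi 0)) (nhds (lam2 W i))) :
    tcone2 C X H = {W | W.IsSymm ∧ lam2 W ∈ tcone2 Θ (lam X) d} :=
  second_tangent_spectral_chain_rule_general Θ hΘsym lam hlam C hC X hXC H hHt d lam2 hexp
end
end

section
/- Let θ : ℝⁿ → (−∞,∞] be symmetric, X ∈ Sⁿ with θ(λ(X)) finite, and H ∈ Sⁿ with dθ(λ(X))(λ′(X;H)) finite. Then the parabolic subderivative w ↦ d²θ(λ(X))(λ′(X;H) | w) is invariant under every permutation matrix Q ∈ Pⁿ_{X,H}: d²θ(λ(X))(λ′(X;H) | Qw) = d²θ(λ(X))(λ′(X;H) | w) for all w ∈ ℝⁿ. -/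
open Filter Topology Set Matrix

noncomputable section

theorem parabSubderiv_apply_eq_of_invariant {E : Type*} [AddCommGroup E] [Module ℝ E]
    [TopologicalSpace E] (f : E → EReal) (L : E ≃L[ℝ] E) (hf : ∀ y, f (L y) = f y)
    {x w : E} (hx : L x = x) (hw : L w = w) (dfw : ℝ) (z : E) :
    parabSubderiv f x w dfw (L z) = parabSubderiv f x w dfw z := by
  have hpoint (t : ℝ) (v : E) :
      f (x + t • w + (t ^ 2 / 2) • L v) = f (x + t • w + (t ^ 2 / 2) • v) := by
    conv_lhs => rw [← hx, ← hw, ← L.map_smul, ← L.map_smul, ← map_add, ← map_add, hf]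
  rw [parabSubderiv, parabSubderiv, ← L.map_nhds_eq, prod_map_right, ← liminf_comp]
  simp only [Function.comp_def, Prod.map_fst, Prod.map_snd, id, hpoint]

theorem parab_subderiv_symmetric_general {n : ℕ} (θ : (Fin n → ℝ) → EReal)
    (hθsym : ∀ (σ : Equiv.Perm (Fin n)) (x : Fin n → ℝ), θ (x ∘ σ) = θ x)
    (a : Fin n → ℝ)
    (d : Fin n → ℝ)
    (s : ℝ)
    (σ : Equiv.Perm (Fin n)) (hσa : a ∘ σ = a) (hσd : d ∘ σ = d)
    (w : Fin n → ℝ) :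
    parabSubderiv θ a d s (w ∘ σ) = parabSubderiv θ a d s w :=
  parabSubderiv_apply_eq_of_invariant θ (LinearEquiv.funCongrLeft ℝ ℝ σ).toContinuousLinearEquiv
    (hθsym σ) hσa hσd s w

/-- the parabolic subderivative w ↦ d²θ(λ(X))(λ′(X;H) | w) is invariant
under every permutation σ fixing λ(X) and λ′(X;H) (the group Pⁿ_{X,H}). -/
theorem parab_subderiv_symmetric {n : ℕ} (θ : (Fin n → ℝ) → EReal)
    (hθsym : ∀ (σ : Equiv.Perm (Fin n)) (x : Fin n → ℝ), θ (x ∘ σ) = θ x)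
    (X : Matrix (Fin n) (Fin n) ℝ) (hX : X.IsSymm)
    (lam : Matrix (Fin n) (Fin n) ℝ → Fin n → ℝ)
    (hlam : ∀ M : Matrix (Fin n) (Fin n) ℝ, M.IsSymm → IsEigVec M (lam M))
    (a : Fin n → ℝ) (ha : lam X = a)
    (cθ : ℝ) (hθa : θ a = (cθ : EReal))
    (H : Matrix (Fin n) (Fin n) ℝ) (hH : H.IsSymm)
    (d : Fin n → ℝ)
    (hd : ∀ i, Filter.Tendsto (fun t : ℝ => (lam (X + t • H) i - a i) / t)
      (nhdsWithin 0 (Set.Ioi 0)) (nhds (d i)))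
    (s : ℝ) (hs : subderiv θ a d = (s : EReal))
    (σ : Equiv.Perm (Fin n)) (hσa : a ∘ σ = a) (hσd : d ∘ σ = d)
    (w : Fin n → ℝ) :
    parabSubderiv θ a d s (w ∘ σ) = parabSubderiv θ a d s w :=
  parab_subderiv_symmetric_general θ hθsym a d s σ hσa hσd w
end
end

section
/- Let g : Sⁿ → (−∞,∞] be orthogonally invariant and convex with X ∈ Sⁿ, g(X) finite. If v ∈ ℝⁿ satisfies Diag(v) ∈ ∂g(Diag(λ(X))) and U ∈ Oⁿ(X), then U Diag(v) Uᵀ ∈ ∂g(X); and for every H ∈ Sⁿ the second subderivatives agree: d²g(X, U Diag(v)Uᵀ)(UHUᵀ) = d²g(Diag(λ(X)), Diag(v))(H). -/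
open Filter Topology Set Matrix

noncomputable section

/-! Conjugation `W ↦ U W Uᵀ` by an orthogonal `U` is a linear homeomorphism of the matrix space
that preserves `g` and the trace inner product. Both the subgradient inequality and the
difference quotients defining `d²g` are transported verbatim along such a map, and it sends
`Diag(λ(X))`, `Diag(v)`, `H` to `X`, `U Diag(v) Uᵀ`, `U H Uᵀ`. -/

section Transport

variable {E F : Type*} [AddCommGroup E] [Module ℝ E] [AddCommGroup F] [Module ℝ F]
  {ipE : E → E → ℝ} {ipF : F → F → ℝ} {fE : E → EReal} {fF : F → EReal}

theorem subgradient_ineq_map (T : E ≃ₗ[ℝ] F) (hf : ∀ x, fF (T x) = fE x)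
    (hip : ∀ u w, ipF (T u) (T w) = ipE u w) {x v : E}
    (hv : ∀ z, fE x + ((ipE v (z - x) : ℝ) : EReal) ≤ fE z) (z : F) :
    fF (T x) + ((ipF (T v) (z - T x) : ℝ) : EReal) ≤ fF z := by
  obtain ⟨z, rfl⟩ := T.surjective z
  simpa only [← map_sub, hf, hip] using hv z

variable [TopologicalSpace E] [TopologicalSpace F]

theorem subderiv2With_map (T : E ≃L[ℝ] F) (hf : ∀ x, fF (T x) = fE x)
    (hip : ∀ u w, ipF (T u) (T w) = ipE u w) (x v w : E) :
    subderiv2With ipF fF (T x) (T v) (T w) = subderiv2With ipE fE x v w := by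
  rw [subderiv2With, ← T.map_nhds_eq, prod_map_right, ← liminf_comp]
  congr 1
  ext ⟨t, w'⟩
  simp only [Function.comp_apply, Prod.map_apply, id_eq, ← map_smul, ← map_add, hf, hip]

end Transport

section OrthogonalConjugation

variable {m : Type*} [Fintype m] [DecidableEq m] {U : Matrix m m ℝ}

theorem conj_conj_of_mul_transpose_eq_one (hU : U * Uᵀ = 1) (W : Matrix m m ℝ) :
    U * (Uᵀ * W * U) * Uᵀ = W := by
  simp only [Matrix.mul_assoc, hU, Matrix.mul_one, ← Matrix.mul_assoc U Uᵀ, Matrix.one_mul]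

def orthConj (U : Matrix m m ℝ) (hU : U * Uᵀ = 1) : Matrix m m ℝ ≃L[ℝ] Matrix m m ℝ where
  toFun W := U * W * Uᵀ
  invFun W := Uᵀ * W * U
  map_add' A B := by simp only [Matrix.mul_add, Matrix.add_mul]
  map_smul' r A := by simp only [Matrix.mul_smul, Matrix.smul_mul, RingHom.id_apply]
  left_inv W := by
    simpa using conj_conj_of_mul_transpose_eq_one (U := Uᵀ) (mul_eq_one_comm.mp hU) W
  right_inv := conj_conj_of_mul_transpose_eq_one hU
  continuous_toFun := by fun_prop
  continuous_invFun := by fun_prop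

@[simp]
theorem orthConj_apply (hU : U * Uᵀ = 1) (W : Matrix m m ℝ) : orthConj U hU W = U * W * Uᵀ :=
  rfl

end OrthogonalConjugation

theorem mInner_conj {n : ℕ} {U : Matrix (Fin n) (Fin n) ℝ} (hU : Uᵀ * U = 1)
    (A B : Matrix (Fin n) (Fin n) ℝ) : mInner (U * A * Uᵀ) (U * B * Uᵀ) = mInner A B := by
  have hprod : U * A * Uᵀ * (U * B * Uᵀ) = U * (A * B) * Uᵀ := by
    simp only [Matrix.mul_assoc, ← Matrix.mul_assoc Uᵀ U, hU, Matrix.one_mul]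
  rw [mInner, hprod, Matrix.trace_mul_cycle, ← Matrix.mul_assoc, hU, Matrix.one_mul, mInner]

theorem second_subderiv_orth_invariant_general {n : ℕ}
    (g : Matrix (Fin n) (Fin n) ℝ → EReal)
    (hinv : ∀ (O M : Matrix (Fin n) (Fin n) ℝ), O * Oᵀ = 1 → g (Oᵀ * M * O) = g M)
    (X U : Matrix (Fin n) (Fin n) ℝ) (a : Fin n → ℝ)
    (hU : U * Uᵀ = 1) (hXU : X = U * Matrix.diagonal a * Uᵀ)
    (v : Fin n → ℝ)
    (hv : ∀ Z : Matrix (Fin n) (Fin n) ℝ,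
      g (Matrix.diagonal a) +
        ((mInner (Matrix.diagonal v) (Z - Matrix.diagonal a) : ℝ) : EReal) ≤ g Z) :
    (∀ Z : Matrix (Fin n) (Fin n) ℝ,
        g X + ((mInner (U * Matrix.diagonal v * Uᵀ) (Z - X) : ℝ) : EReal) ≤ g Z) ∧
      ∀ H : Matrix (Fin n) (Fin n) ℝ, H.IsSymm →
        subderiv2With mInner g X (U * Matrix.diagonal v * Uᵀ) (U * H * Uᵀ) =
          subderiv2With mInner g (Matrix.diagonal a) (Matrix.diagonal v) H := by
  have hUU : Uᵀ * U = 1 := mul_eq_one_comm.mp hU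
  have hg : ∀ M, g (orthConj U hU M) = g M := fun M => by
    simpa using hinv Uᵀ M (by simpa using hUU)
  have hip : ∀ A B, mInner (orthConj U hU A) (orthConj U hU B) = mInner A B :=
    mInner_conj hUU
  subst hXU
  exact ⟨subgradient_ineq_map (orthConj U hU).toLinearEquiv hg hip hv,
    fun H _ => subderiv2With_map (orthConj U hU) hg hip _ _ H⟩

/-- for orthogonally invariant convex g, if Diag(v) ∈ ∂g(Diag(λ(X))) and
U ∈ Oⁿ(X), then U Diag(v) Uᵀ ∈ ∂g(X) and the second subderivatives agree:
d²g(X, U Diag(v)Uᵀ)(UHUᵀ) = d²g(Diag(λ(X)), Diag(v))(H). -/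
theorem second_subderiv_orth_invariant {n : ℕ}
    (g : Matrix (Fin n) (Fin n) ℝ → EReal)
    (hdom : ∀ X : Matrix (Fin n) (Fin n) ℝ, ¬ X.IsSymm → g X = ⊤)
    (hinv : ∀ (O M : Matrix (Fin n) (Fin n) ℝ), O * Oᵀ = 1 → g (Oᵀ * M * O) = g M)
    (hconv : ∀ (A B : Matrix (Fin n) (Fin n) ℝ) (s t : ℝ), 0 ≤ s → 0 ≤ t → s + t = 1 →
      g (s • A + t • B) ≤ ((s : ℝ) : EReal) * g A + ((t : ℝ) : EReal) * g B)
    (X U : Matrix (Fin n) (Fin n) ℝ) (a : Fin n → ℝ)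
    (hord : ∀ i j : Fin n, i ≤ j → a j ≤ a i)
    (hU : U * Uᵀ = 1) (hXU : X = U * Matrix.diagonal a * Uᵀ)
    (c : ℝ) (hfin : g X = (c : EReal))
    (v : Fin n → ℝ)
    (hv : ∀ Z : Matrix (Fin n) (Fin n) ℝ,
      g (Matrix.diagonal a) +
        ((mInner (Matrix.diagonal v) (Z - Matrix.diagonal a) : ℝ) : EReal) ≤ g Z) :
    (∀ Z : Matrix (Fin n) (Fin n) ℝ,
        g X + ((mInner (U * Matrix.diagonal v * Uᵀ) (Z - X) : ℝ) : EReal) ≤ g Z) ∧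
      ∀ H : Matrix (Fin n) (Fin n) ℝ, H.IsSymm →
        subderiv2With mInner g X (U * Matrix.diagonal v * Uᵀ) (U * H * Uᵀ) =
          subderiv2With mInner g (Matrix.diagonal a) (Matrix.diagonal v) H :=
  second_subderiv_orth_invariant_general g hinv X U a hU hXU v hv
end
end
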